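/- In a globally hyperbolic, causally path-connected, approximating Lorentzian pre-length space where the space of causal curves C(p,q) between any two points is compact (in Hausdorff distance), the causal diamonds J(p,q) = J⁺(p) ∩ J⁻(q) are compact for all p ≤ q. -/

import Mathlib

open Set Filter Topology MeasureTheory TopologicalSpace

/-- A Lorentzian pre-length space structure on a metric space `X`:
a preorder `causal` (≤), a transitive relation `chron` (≪) contained in `causal`,
and a lower semicontinuous time separation function `tau` satisfying the usual axioms. -/
structure LPLS (X : Type*) [MetricSpace X] where
  causal : X → X → Prop
  chron : X → X → Prop
  tau : X → X → ENNReal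
  causal_refl : ∀ x, causal x x
  causal_trans : ∀ {x y z}, causal x y → causal y z → causal x z
  chron_trans : ∀ {x y z}, chron x y → chron y z → chron x z
  chron_subset_causal : ∀ {x y}, chron x y → causal x y
  tau_lsc : LowerSemicontinuous fun p : X × X => tau p.1 p.2
  tau_pos : ∀ {x y}, chron x y → 0 < tau x y
  tau_eq_zero : ∀ {x y}, ¬ causal x y → tau x y = 0
  tau_superadd : ∀ {x y z}, causal x y → causal y z → tau x y + tau y z ≤ tau x z

variable {X : Type*} [MetricSpace X]

namespace LPLS

/-- chronological future `I⁺(p)` -/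
def Iplus (L : LPLS X) (p : X) : Set X := {x | L.chron p x}
/-- chronological past `I⁻(p)` -/
def Iminus (L : LPLS X) (p : X) : Set X := {x | L.chron x p}
/-- causal future `J⁺(p)` -/
def Jplus (L : LPLS X) (p : X) : Set X := {x | L.causal p x}
/-- causal past `J⁻(p)` -/
def Jminus (L : LPLS X) (p : X) : Set X := {x | L.causal x p}

def IplusSet (L : LPLS X) (S : Set X) : Set X := ⋃ p ∈ S, L.Iplus p
def IminusSet (L : LPLS X) (S : Set X) : Set X := ⋃ p ∈ S, L.Iminus p
def JplusSet (L : LPLS X) (S : Set X) : Set X := ⋃ p ∈ S, L.Jplus p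
def JminusSet (L : LPLS X) (S : Set X) : Set X := ⋃ p ∈ S, L.Jminus p

/-- a map is locally Lipschitz on a set `I` -/
def LocLipOn (I : Set ℝ) (γ : ℝ → X) : Prop :=
  ∀ s ∈ I, ∃ K : NNReal, ∃ U ∈ nhdsWithin s I, LipschitzOnWith K γ U

/-- future-directed causal curve with parameter domain `I`:
non-constant, locally Lipschitz and monotone with respect to the causal relation. -/
def IsCausalCurveOn (L : LPLS X) (I : Set ℝ) (γ : ℝ → X) : Prop :=
  (¬ ∀ s ∈ I, ∀ t ∈ I, γ s = γ t) ∧ LocLipOn I γ ∧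
    ∀ ⦃s⦄, s ∈ I → ∀ ⦃t⦄, t ∈ I → s < t → L.causal (γ s) (γ t)

/-- future-directed timelike curve with parameter domain `I`. -/
def IsTimelikeCurveOn (L : LPLS X) (I : Set ℝ) (γ : ℝ → X) : Prop :=
  (¬ ∀ s ∈ I, ∀ t ∈ I, γ s = γ t) ∧ LocLipOn I γ ∧
    ∀ ⦃s⦄, s ∈ I → ∀ ⦃t⦄, t ∈ I → s < t → L.chron (γ s) (γ t)

/-- causal path-connectedness -/
def CausallyPathConnected (L : LPLS X) : Prop :=
  (∀ p q : X, L.causal p q → p ≠ q →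
    ∃ γ : ℝ → X, L.IsCausalCurveOn (Icc 0 1) γ ∧ γ 0 = p ∧ γ 1 = q) ∧
  (∀ p q : X, L.chron p q →
    ∃ γ : ℝ → X, L.IsTimelikeCurveOn (Icc 0 1) γ ∧ γ 0 = p ∧ γ 1 = q)

/-- the relation `≤_U`: connected by a causal curve inside `U` -/
def causalIn (L : LPLS X) (U : Set X) (p q : X) : Prop :=
  ∃ γ : ℝ → X, L.IsCausalCurveOn (Icc 0 1) γ ∧ γ 0 = p ∧ γ 1 = q ∧
    ∀ s ∈ Icc (0:ℝ) 1, γ s ∈ U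

/-- every point has a neighbourhood `U` such that `≤_U` is closed -/
def LocallyWeaklyCausallyClosed (L : LPLS X) : Prop :=
  ∀ p : X, ∃ U ∈ 𝓝 p, IsClosed {z : X × X | L.causalIn U z.1 z.2}

/-- `d`-compatibility: local uniform bound for the `d`-arclength of causal curves -/
def DCompatible (L : LPLS X) : Prop :=
  ∀ p : X, ∃ U ∈ 𝓝 p, ∃ C : ℝ, ∀ (I : Set ℝ) (γ : ℝ → X),
    L.IsCausalCurveOn I γ → (∀ s ∈ I, γ s ∈ U) → eVariationOn γ I ≤ ENNReal.ofReal C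

/-- a Lorentzian pre-length space with limit curves: causally path-connected,
locally weakly causally closed and `d`-compatible -/
def HasLimitCurves (L : LPLS X) : Prop :=
  L.CausallyPathConnected ∧ L.LocallyWeaklyCausallyClosed ∧ L.DCompatible

def FutureApproximating (L : LPLS X) : Prop := ∀ p : X, L.Jplus p ⊆ closure (L.Iplus p)
def PastApproximating (L : LPLS X) : Prop := ∀ p : X, L.Jminus p ⊆ closure (L.Iminus p)
def Approximating (L : LPLS X) : Prop := L.FutureApproximating ∧ L.PastApproximating

/-- non-total imprisonment: a uniform arclength bound for causal curves in any compact set -/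
def NonTotallyImprisoning (L : LPLS X) : Prop :=
  ∀ K : Set X, IsCompact K → ∃ C : ℝ, 0 < C ∧ ∀ (I : Set ℝ) (γ : ℝ → X),
    L.IsCausalCurveOn I γ → (∀ s ∈ I, γ s ∈ K) → eVariationOn γ I ≤ ENNReal.ofReal C

/-- future-inextendible (future-directed) causal curve, parametrized on `[0,∞)`;
by the analogue of [KuSa, Lemma 3.12] inextendibility is captured by the
nonexistence of the limit at `+∞`. -/
def IsFutureInextCurve (L : LPLS X) (γ : ℝ → X) : Prop :=
  L.IsCausalCurveOn (Ici 0) γ ∧ ∀ p : X, ¬ Tendsto γ atTop (𝓝 p)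

/-- past-inextendible (future-directed) causal curve, parametrized on `(-∞,0]`. -/
def IsPastInextCurve (L : LPLS X) (γ : ℝ → X) : Prop :=
  L.IsCausalCurveOn (Iic 0) γ ∧ ∀ p : X, ¬ Tendsto γ atBot (𝓝 p)

/-- doubly-inextendible causal curve, parametrized on all of `ℝ`. -/
def IsDoublyInextCurve (L : LPLS X) (γ : ℝ → X) : Prop :=
  L.IsCausalCurveOn univ γ ∧ (∀ p : X, ¬ Tendsto γ atTop (𝓝 p)) ∧
    (∀ p : X, ¬ Tendsto γ atBot (𝓝 p))

/-- a Cauchy set: every doubly-inextendible causal curve meets it exactly once -/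
def IsCauchySet (L : LPLS X) (S : Set X) : Prop :=
  ∀ γ : ℝ → X, L.IsDoublyInextCurve γ →
    (∃ u : ℝ, γ u ∈ S) ∧ ∀ u v : ℝ, γ u ∈ S → γ v ∈ S → γ u = γ v

/-- volume of the open `r`-thickening of `I⁻(p)` -/
noncomputable def Vminus (L : LPLS X) [MeasurableSpace X] (μ : Measure X) (r : ℝ) (p : X) : ℝ :=
  (μ (Metric.thickening r (L.Iminus p))).toReal

/-- the averaged past volume function `t⁻(p) = ∫₀¹ V⁻ᵣ(p) dr` (without the sign) -/
noncomputable def tminus (L : LPLS X) [MeasurableSpace X] (μ : Measure X) (p : X) : ℝ :=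
  ∫ r in Ioo (0:ℝ) 1, L.Vminus μ r p

/-- full support: every nonempty open set has positive measure -/
def FullSupport [MeasurableSpace X] (μ : Measure X) : Prop :=
  ∀ U : Set X, IsOpen U → U.Nonempty → 0 < μ U

end LPLS

/-!
Every point `x` of `J(p,q)` lies on the image of a causal curve from `p` to `q`: concatenate
curves from `p` to `x` and from `x` to `q`. Conversely every such image lies in `J(p,q)`. So
`J(p,q)` is the union of the members of `C(p,q)`, and a union of a compact family of compact sets
(compact in the Hausdorff metric, i.e. the Vietoris topology) is compact. The only case without
curves, `J(p,q) ⊆ {p}`, is trivial.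
-/

namespace LPLS

section Curves

variable {Y : Type*} {I J A B : Set ℝ} {γ f γ₁ γ₂ : ℝ → X} {δ₁ δ₂ : ℝ → Y}

theorem LocLipOn.continuousOn (h : LocLipOn I γ) : ContinuousOn γ I := by
  intro s hs
  obtain ⟨K, U, hU, hL⟩ := h s hs
  obtain ⟨V, -, hsV, hVU⟩ := mem_nhdsWithin.mp hU
  exact (hL.continuousOn s (hVU ⟨hsV, hs⟩)).mono_of_mem_nhdsWithin hU

theorem LocLipOn.mono (h : LocLipOn J γ) (hIJ : I ⊆ J) : LocLipOn I γ := fun s hs =>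
  let ⟨K, U, hU, hL⟩ := h s (hIJ hs)
  ⟨K, U, nhdsWithin_mono s hIJ hU, hL⟩

theorem LocLipOn.congr (h : LocLipOn I f) (hfγ : EqOn f γ I) : LocLipOn I γ := by
  intro s hs
  obtain ⟨K, U, hU, hL⟩ := h s hs
  refine ⟨K, U ∩ I, inter_mem hU self_mem_nhdsWithin, fun x hx y hy => ?_⟩
  rw [← hfγ hx.2, ← hfγ hy.2]
  exact hL hx.1 hy.1

theorem LocLipOn.comp_lipschitzWith {m : ℝ → ℝ} {K : NNReal} (h : LocLipOn J γ)
    (hm : LipschitzWith K m) (hmaps : MapsTo m I J) : LocLipOn I (γ ∘ m) := by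
  intro s hs
  obtain ⟨K', U, hU, hL⟩ := h (m s) (hmaps hs)
  exact ⟨K' * K, m ⁻¹' U, hm.continuous.continuousWithinAt.tendsto_nhdsWithin hmaps hU,
    hL.comp hm.lipschitzOnWith (mapsTo_preimage m U)⟩

theorem LocLipOn.of_isOpen_cover (hA : IsOpen A) (hB : IsOpen B) (hI : I ⊆ A ∪ B)
    (hγA : LocLipOn (I ∩ A) γ) (hγB : LocLipOn (I ∩ B) γ) : LocLipOn I γ := by
  intro s hs
  rcases hI hs with hsA | hsB
  · obtain ⟨K, U, hU, hL⟩ := hγA s ⟨hs, hsA⟩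
    exact ⟨K, U, by rwa [nhdsWithin_restrict' I (hA.mem_nhds hsA)], hL⟩
  · obtain ⟨K, U, hU, hL⟩ := hγB s ⟨hs, hsB⟩
    exact ⟨K, U, by rwa [nhdsWithin_restrict' I (hB.mem_nhds hsB)], hL⟩

theorem IsCausalCurveOn.causal_of_le {L : LPLS X} (h : L.IsCausalCurveOn I γ) {s t : ℝ}
    (hs : s ∈ I) (ht : t ∈ I) (hst : s ≤ t) : L.causal (γ s) (γ t) := by
  rcases hst.eq_or_lt with rfl | hlt
  · exact L.causal_refl _
  · exact h.2.2 hs ht hlt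

/-- `γ₁` is traversed on `[0, 1/3]`, `γ₂` on `[2/3, 1]`, and the junction point is held on
`[1/3, 2/3]`. Thanks to this plateau, near every parameter the concatenation is a single
reparametrised piece (see `concat_eqOn_Iic`, `concat_eqOn_Ici`). -/
noncomputable def concat (γ₁ γ₂ : ℝ → Y) (t : ℝ) : Y :=
  if t ≤ 1 / 2 then γ₁ (min (3 * t) 1) else γ₂ (max (3 * t - 2) 0)

theorem concat_eqOn_Iic (hglue : δ₁ 1 = δ₂ 0) :
    EqOn (concat δ₁ δ₂) (fun t => δ₁ (min (3 * t) 1)) (Iic (2 / 3)) := by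
  intro t ht
  have ht' : t ≤ 2 / 3 := ht
  dsimp only [concat]
  split_ifs with h
  · rfl
  · rw [max_eq_right (show 3 * t - 2 ≤ 0 by linarith),
      min_eq_right (show (1 : ℝ) ≤ 3 * t by linarith [not_le.mp h]), hglue]

theorem concat_eqOn_Ici (hglue : δ₁ 1 = δ₂ 0) :
    EqOn (concat δ₁ δ₂) (fun t => δ₂ (max (3 * t - 2) 0)) (Ici (1 / 3)) := by
  intro t ht
  have ht' : 1 / 3 ≤ t := ht
  dsimp only [concat]
  split_ifs with h
  · rw [max_eq_right (show 3 * t - 2 ≤ 0 by linarith),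
      min_eq_right (show (1 : ℝ) ≤ 3 * t by linarith), hglue]
  · rfl

theorem concat_zero : concat δ₁ δ₂ 0 = δ₁ 0 := by norm_num [concat]

theorem concat_one : concat δ₁ δ₂ 1 = δ₂ 1 := by norm_num [concat]

theorem concat_half : concat δ₁ δ₂ (1 / 2) = δ₁ 1 := by norm_num [concat]

theorem lipschitzWith_min_three_mul : LipschitzWith 3 fun t : ℝ => min (3 * t) 1 := by
  simpa using (lipschitzWith_smul (3 : ℝ)).min_const 1

theorem lipschitzWith_max_three_mul_sub : LipschitzWith 3 fun t : ℝ => max (3 * t - 2) 0 := by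
  refine LipschitzWith.max_const (LipschitzWith.of_dist_le_mul fun x y => ?_) 0
  rw [Real.dist_eq, Real.dist_eq, show 3 * x - 2 - (3 * y - 2) = 3 * (x - y) by ring, abs_mul]
  norm_num

theorem mapsTo_min_three_mul : MapsTo (fun t : ℝ => min (3 * t) 1) (Icc 0 1) (Icc 0 1) :=
  fun t ht => ⟨le_min (by linarith [ht.1]) zero_le_one, min_le_right _ _⟩

theorem mapsTo_max_three_mul_sub : MapsTo (fun t : ℝ => max (3 * t - 2) 0) (Icc 0 1) (Icc 0 1) :=
  fun t ht => ⟨le_max_right _ _, max_le (by linarith [ht.2]) zero_le_one⟩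

theorem LocLipOn.concat (h₁ : LocLipOn (Icc 0 1) γ₁) (h₂ : LocLipOn (Icc 0 1) γ₂)
    (hglue : γ₁ 1 = γ₂ 0) : LocLipOn (Icc 0 1) (concat γ₁ γ₂) := by
  refine of_isOpen_cover (isOpen_Iio (a := 2 / 3)) (isOpen_Ioi (a := 1 / 3)) ?_ ?_ ?_
  · intro t _
    rcases lt_or_ge t (2 / 3) with ht | ht
    exacts [Or.inl ht, Or.inr (mem_Ioi.2 (by linarith))]
  · refine ((h₁.comp_lipschitzWith lipschitzWith_min_three_mul mapsTo_min_three_mul).mono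
      inter_subset_left).congr ?_
    exact ((concat_eqOn_Iic hglue).mono (inter_subset_right.trans Iio_subset_Iic_self)).symm
  · refine ((h₂.comp_lipschitzWith lipschitzWith_max_three_mul_sub
      mapsTo_max_three_mul_sub).mono inter_subset_left).congr ?_
    exact ((concat_eqOn_Ici hglue).mono (inter_subset_right.trans Ioi_subset_Ici_self)).symm

theorem IsCausalCurveOn.concat {L : LPLS X} (h₁ : L.IsCausalCurveOn (Icc 0 1) γ₁)
    (h₂ : L.IsCausalCurveOn (Icc 0 1) γ₂) (hglue : γ₁ 1 = γ₂ 0) (hne : γ₁ 0 ≠ γ₁ 1) :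
    L.IsCausalCurveOn (Icc 0 1) (concat γ₁ γ₂) := by
  refine ⟨fun hconst => hne ?_, h₁.2.1.concat h₂.2.1 hglue, fun s hs t ht hst => ?_⟩
  · rw [← concat_zero (δ₁ := γ₁) (δ₂ := γ₂), ← concat_half (δ₁ := γ₁) (δ₂ := γ₂)]
    exact hconst 0 (by norm_num) (1 / 2) (by norm_num)
  by_cases ht23 : t ≤ 2 / 3
  · rw [concat_eqOn_Iic hglue (hst.le.trans ht23 : s ≤ 2 / 3), concat_eqOn_Iic hglue ht23]
    exact h₁.causal_of_le (mapsTo_min_three_mul hs) (mapsTo_min_three_mul ht)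
      (min_le_min_right 1 (by linarith))
  by_cases hs13 : 1 / 3 ≤ s
  · rw [concat_eqOn_Ici hglue hs13, concat_eqOn_Ici hglue (hs13.trans hst.le : 1 / 3 ≤ t)]
    exact h₂.causal_of_le (mapsTo_max_three_mul_sub hs) (mapsTo_max_three_mul_sub ht)
      (max_le_max_right 0 (by linarith))
  rw [concat_eqOn_Iic hglue (by linarith [not_le.mp hs13] : s ≤ 2 / 3),
    concat_eqOn_Ici hglue (by linarith [not_le.mp ht23] : 1 / 3 ≤ t)]
  refine L.causal_trans (hglue ▸ h₁.causal_of_le (mapsTo_min_three_mul hs) ?_ (min_le_right _ _))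
    (h₂.causal_of_le ?_ (mapsTo_max_three_mul_sub ht) (le_max_right _ _)) <;> norm_num

end Curves

section Diamond

variable {L : LPLS X} {p q x : X}

/-- The space `C(p,q)` of the paper, as a subspace of the Hausdorff metric space. -/
def causalCurveImages (L : LPLS X) (p q : X) : Set (NonemptyCompacts X) :=
  {K | ∃ γ : ℝ → X, L.IsCausalCurveOn (Icc 0 1) γ ∧ γ 0 = p ∧ γ 1 = q ∧
    (K : Set X) = γ '' Icc 0 1}

theorem biUnion_causalCurveImages_subset :
    ⋃ K ∈ L.causalCurveImages p q, (K : Set X) ⊆ L.Jplus p ∩ L.Jminus q := by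
  simp only [iUnion₂_subset_iff]
  rintro K ⟨γ, hγ, rfl, rfl, hK⟩ x hx
  rw [hK] at hx
  obtain ⟨s, hs, rfl⟩ := hx
  exact ⟨hγ.causal_of_le (left_mem_Icc.2 zero_le_one) hs hs.1,
    hγ.causal_of_le hs (right_mem_Icc.2 zero_le_one) hs.2⟩

theorem mem_biUnion_causalCurveImages_of_mem_image {γ : ℝ → X}
    (hγ : L.IsCausalCurveOn (Icc 0 1) γ) (h0 : γ 0 = p) (h1 : γ 1 = q)
    (hx : x ∈ γ '' Icc 0 1) : x ∈ ⋃ K ∈ L.causalCurveImages p q, (K : Set X) := by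
  let K : NonemptyCompacts X :=
    ⟨⟨γ '' Icc 0 1, isCompact_Icc.image_of_continuousOn hγ.2.1.continuousOn⟩,
      (nonempty_Icc.2 zero_le_one).image γ⟩
  exact mem_biUnion (x := K) ⟨γ, hγ, h0, h1, rfl⟩ hx

theorem mem_biUnion_causalCurveImages (hc : L.CausallyPathConnected)
    (hx : x ∈ L.Jplus p ∩ L.Jminus q) (hxp : x ≠ p) :
    x ∈ ⋃ K ∈ L.causalCurveImages p q, (K : Set X) := by
  obtain ⟨γ₁, hγ₁, h10, h11⟩ := hc.1 p x hx.1 hxp.symm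
  by_cases hxq : x = q
  · subst hxq
    exact mem_biUnion_causalCurveImages_of_mem_image hγ₁ h10 h11
      ⟨1, right_mem_Icc.2 zero_le_one, h11⟩
  obtain ⟨γ₂, hγ₂, h20, h21⟩ := hc.1 x q hx.2 hxq
  have hglue : γ₁ 1 = γ₂ 0 := h11.trans h20.symm
  have hne : γ₁ 0 ≠ γ₁ 1 := by rw [h10, h11]; exact hxp.symm
  exact mem_biUnion_causalCurveImages_of_mem_image (hγ₁.concat hγ₂ hglue hne)
    (concat_zero.trans h10) (concat_one.trans h21) ⟨1 / 2, by norm_num, concat_half.trans h11⟩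

theorem causalDiamond_eq_biUnion_causalCurveImages (hc : L.CausallyPathConnected)
    (hx : x ∈ L.Jplus p ∩ L.Jminus q) (hxp : x ≠ p) :
    L.Jplus p ∩ L.Jminus q = ⋃ K ∈ L.causalCurveImages p q, (K : Set X) := by
  refine subset_antisymm (fun y hy => ?_) biUnion_causalCurveImages_subset
  rcases eq_or_ne y p with rfl | hyp
  · obtain ⟨_, ⟨γ, hγ, h0, h1, -⟩, -⟩ := mem_iUnion₂.1 (mem_biUnion_causalCurveImages hc hx hxp)
    exact mem_biUnion_causalCurveImages_of_mem_image hγ h0 h1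
      ⟨0, left_mem_Icc.2 zero_le_one, h0⟩
  · exact mem_biUnion_causalCurveImages hc hy hyp

end Diamond

end LPLS

theorem LPLS.isCompact_causalDiamond_general {X : Type*} [MetricSpace X]
    (L : LPLS X) (hc : L.CausallyPathConnected)
    (hcomp : ∀ p q : X, IsCompact {K : NonemptyCompacts X |
      ∃ γ : ℝ → X, L.IsCausalCurveOn (Icc 0 1) γ ∧ γ 0 = p ∧ γ 1 = q ∧
        (K : Set X) = γ '' Icc 0 1}) :
    ∀ p q : X, L.causal p q → IsCompact (L.Jplus p ∩ L.Jminus q) := by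
  intro p q _
  by_cases hJ : ∃ x ∈ L.Jplus p ∩ L.Jminus q, x ≠ p
  · obtain ⟨x, hx, hxp⟩ := hJ
    rw [causalDiamond_eq_biUnion_causalCurveImages hc hx hxp]
    exact NonemptyCompacts.isCompact_biUnion_coe_of_isCompact (hcomp p q)
  · push Not at hJ
    exact (subsingleton_singleton.anti hJ).isCompact

/-- If the spaces of causal curves `C(p,q)` (curve images, with the Hausdorff
distance) are compact, then the causal diamonds `J(p,q)` are compact. -/
theorem LPLS.isCompact_causalDiamond {X : Type*} [MetricSpace X]
    (L : LPLS X) (happ : L.Approximating) (hc : L.CausallyPathConnected)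
    (hnti : L.NonTotallyImprisoning)
    (hcomp : ∀ p q : X, IsCompact {K : NonemptyCompacts X |
      ∃ γ : ℝ → X, L.IsCausalCurveOn (Icc 0 1) γ ∧ γ 0 = p ∧ γ 1 = q ∧
        (K : Set X) = γ '' Icc 0 1}) :
    ∀ p q : X, L.causal p q → IsCompact (L.Jplus p ∩ L.Jminus q) :=
  LPLS.isCompact_causalDiamond_general L hc hcomp
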